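/- arXiv:math/0608637 — 4 statements merged into one kernel-verified Lean document; each statement's English description precedes it below -/
import Mathlib

section
/- Let (V_n) be a subadditive sequence of nonnegative real numbers (V_{m+n} ≤ V_m + V_n) such that ∑_{n≥1} n^{-3/2} V_n < ∞. Then for every m, the series ∑_{j≥0} V_{m·2^j}/2^{j/2} converges, and lim_{m→∞} (1/√m) ∑_{j=0}^{∞} V_{m·2^j}/2^{j/2} = 0. -/
/-!
Pairing `k` with `N - k` in subadditivity gives `N V_N ≤ 4 ∑_{k<N} V_k`. Hence
`m^{-1/2} V_{m 2^j} / 2^{j/2} ≤ 4 (m 2^j)^{-3/2} ∑_{k < m 2^j} V_k`, and after exchanging the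
sums over `j` and `k`, each `V_k` carries the geometric weight `∑_{j : k < m 2^j} (m 2^j)^{-3/2}`,
which is at most twice its first term, so at most `2 max(k, m)^{-3/2}`. The normalized series
is therefore bounded by `8 ∑_k V_k / max(k, m)^{3/2}`, which tends to `0` by dominated
convergence against the summable series `∑_k V_k / k^{3/2}`.
-/

open Filter Finset Topology

lemma mul_le_four_mul_sum_Ico_of_subadditive {V : ℕ → ℝ}
    (hsub : ∀ m n, 1 ≤ m → 1 ≤ n → V (m + n) ≤ V m + V n) {N : ℕ} (hN : 2 ≤ N)
    (hVN : 0 ≤ V N) :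
    N * V N ≤ 4 * ∑ k ∈ Ico 1 N, V k := by
  have hsplit : ∀ k ∈ Ico 1 N, V N ≤ V k + V (N - k) := fun k hk => by
    rw [mem_Ico] at hk
    simpa [Nat.add_sub_cancel' hk.2.le] using hsub k (N - k) hk.1 (by omega)
  have hreflect : ∑ k ∈ Ico 1 N, V (N - k) = ∑ k ∈ Ico 1 N, V k :=
    sum_nbij' (N - ·) (N - ·) (by intro k hk; simp at hk ⊢; omega)
      (by intro k hk; simp at hk ⊢; omega) (by intro k hk; simp at hk; omega)
      (by intro k hk; simp at hk; omega) fun _ _ => rfl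
  have hpairs : ((N : ℝ) - 1) * V N ≤ 2 * ∑ k ∈ Ico 1 N, V k := by
    have := card_nsmul_le_sum _ _ _ hsplit
    rw [sum_add_distrib, hreflect, Nat.card_Ico, nsmul_eq_mul,
      Nat.cast_sub (by omega : 1 ≤ N)] at this
    push_cast at this
    linarith
  have hN' : (2 : ℝ) ≤ N := by exact_mod_cast hN
  nlinarith

lemma sum_one_div_rpow_mul_two_pow_le {p c y : ℝ} (hp : 1 ≤ p) (hy : 0 < y) (S : Finset ℕ)
    (hS : ∀ j ∈ S, y ≤ c * 2 ^ j) :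
    ∑ j ∈ S, 1 / (c * 2 ^ j) ^ p ≤ 2 / y ^ p := by
  rcases S.eq_empty_or_nonempty with rfl | hne
  · simp only [sum_empty]; positivity
  set j₀ := S.min' hne
  have hterm : ∀ j ∈ S, 1 / (c * 2 ^ j) ^ p ≤ 1 / y ^ p * (1 / 2) ^ (j - j₀) := by
    intro j hj
    have hj₀ : j₀ ≤ j := S.min'_le j hj
    have hc : y ≤ c * 2 ^ j₀ := hS _ (S.min'_mem hne)
    have hpow : (2 : ℝ) ^ (j - j₀) ≤ ((2 : ℝ) ^ (j - j₀)) ^ p :=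
      Real.self_le_rpow_of_one_le (one_le_pow₀ one_le_two) hp
    have hsplit : c * 2 ^ j = c * 2 ^ j₀ * 2 ^ (j - j₀) := by
      rw [mul_assoc, ← pow_add, Nat.add_sub_cancel' hj₀]
    rw [hsplit, Real.mul_rpow (hy.le.trans hc) (by positivity), one_div_pow,
      ← one_div_mul_one_div]
    gcongr
  calc ∑ j ∈ S, 1 / (c * 2 ^ j) ^ p
      ≤ ∑ j ∈ Ico j₀ (S.max' hne + 1), 1 / y ^ p * (1 / 2) ^ (j - j₀) := by
        refine (sum_le_sum hterm).trans
          (sum_le_sum_of_subset_of_nonneg ?_ fun _ _ _ => by positivity)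
        intro j hj
        simpa [Nat.lt_succ_iff] using ⟨S.min'_le j hj, S.le_max' j hj⟩
    _ = 1 / y ^ p * ∑ i ∈ range (S.max' hne + 1 - j₀), (1 / 2 : ℝ) ^ i := by
        rw [sum_Ico_eq_sum_range, mul_sum]
        simp
    _ ≤ 1 / y ^ p * 2 := by gcongr; exact sum_geometric_two_le _
    _ = 2 / y ^ p := by ring

lemma mul_two_pow_rpow_three_halves (x : ℝ) (hx : 0 ≤ x) (j : ℕ) :
    (x * 2 ^ j) ^ ((3 : ℝ) / 2) = x * 2 ^ j * √x * 2 ^ ((j : ℝ) / 2) := by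
  have h2j : ((2 : ℝ) ^ j) ^ ((1 : ℝ) / 2) = 2 ^ ((j : ℝ) / 2) := by
    rw [← Real.rpow_natCast, ← Real.rpow_mul zero_le_two]; ring_nf
  rw [show (3 : ℝ) / 2 = 1 + 1 / 2 by norm_num, Real.rpow_add' (by positivity) (by norm_num),
    Real.rpow_one, Real.mul_rpow hx (by positivity), h2j, Real.sqrt_eq_rpow]
  ring

lemma div_two_rpow_half_le_of_subadditive {V : ℕ → ℝ} (hnonneg : ∀ n, 1 ≤ n → 0 ≤ V n)
    (hsub : ∀ m n, 1 ≤ m → 1 ≤ n → V (m + n) ≤ V m + V n) {m : ℕ} (hm : 2 ≤ m) (j : ℕ) :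
    V (m * 2 ^ j) / 2 ^ ((j : ℝ) / 2) ≤
      4 * √m * ∑ k ∈ Ico 1 (m * 2 ^ j), V k / ((m : ℝ) * 2 ^ j) ^ ((3 : ℝ) / 2) := by
  have hN : 2 ≤ m * 2 ^ j := hm.trans (Nat.le_mul_of_pos_right m (by positivity))
  have hbound := mul_le_four_mul_sum_Ico_of_subadditive hsub hN (hnonneg _ (by omega))
  push_cast at hbound
  have hm0 : (0 : ℝ) < m := by positivity
  have hsm : 0 < √(m : ℝ) := Real.sqrt_pos.mpr hm0
  rw [← sum_div, mul_two_pow_rpow_three_halves _ hm0.le, div_le_iff₀ (by positivity)]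
  calc V (m * 2 ^ j) ≤ 4 * (∑ k ∈ Ico 1 (m * 2 ^ j), V k) / (m * 2 ^ j) := by
        rw [le_div_iff₀ (by positivity)]; linarith
    _ = _ := by field_simp

lemma summable_div_max_rpow {b : ℕ → ℝ} {p : ℝ} (hp : 0 ≤ p) (hb : ∀ n, 0 ≤ b n)
    (hsum : Summable fun n : ℕ => b n / ((n : ℝ) + 1) ^ p) (x : ℝ) :
    Summable fun n : ℕ => b n / max ((n : ℝ) + 1) x ^ p :=
  hsum.of_nonneg_of_le (fun n => div_nonneg (hb n) (by positivity)) fun n =>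
    div_le_div_of_nonneg_left (hb n) (by positivity)
      (Real.rpow_le_rpow (by positivity) (le_max_left _ _) hp)

lemma tendsto_tsum_div_max_rpow_zero {b : ℕ → ℝ} {p : ℝ} (hp : 0 < p) (hb : ∀ n, 0 ≤ b n)
    (hsum : Summable fun n : ℕ => b n / ((n : ℝ) + 1) ^ p) :
    Tendsto (fun m : ℕ => ∑' n, b n / max ((n : ℝ) + 1) m ^ p) atTop (𝓝 0) := by
  have hterm : ∀ n, Tendsto (fun m : ℕ => b n / max ((n : ℝ) + 1) m ^ p) atTop (𝓝 0) :=
    fun n => tendsto_const_nhds.div_atTop <| (tendsto_rpow_atTop hp).comp <|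
      tendsto_atTop_mono (fun _ => le_max_right _ _) tendsto_natCast_atTop_atTop
  simpa using tendsto_tsum_of_dominated_convergence hsum hterm <| .of_forall fun m n => by
    rw [Real.norm_of_nonneg (div_nonneg (hb n) (by positivity))]
    exact div_le_div_of_nonneg_left (hb n) (by positivity)
      (Real.rpow_le_rpow (by positivity) (le_max_left _ _) hp.le)

lemma sum_range_div_two_rpow_half_le_of_subadditive {V : ℕ → ℝ} (hnonneg : ∀ n, 1 ≤ n → 0 ≤ V n)
    (hsub : ∀ m n, 1 ≤ m → 1 ≤ n → V (m + n) ≤ V m + V n)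
    (hsum : Summable fun n : ℕ => V (n + 1) / ((n : ℝ) + 1) ^ ((3 : ℝ) / 2))
    {m : ℕ} (hm : 2 ≤ m) (J : ℕ) :
    ∑ j ∈ range J, V (m * 2 ^ j) / 2 ^ ((j : ℝ) / 2) ≤
      8 * √m * ∑' n : ℕ, V (n + 1) / max ((n : ℝ) + 1) m ^ ((3 : ℝ) / 2) := by
  have hm0 : (0 : ℝ) < m := by positivity
  have hswap : ∀ j k, j ∈ range J ∧ k ∈ Ico 1 (m * 2 ^ j) ↔
      j ∈ (range J).filter (fun j => k < m * 2 ^ j) ∧ k ∈ Ico 1 (m * 2 ^ J) := by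
    intro j k
    simp only [mem_range, mem_Ico, mem_filter]
    constructor
    · rintro ⟨hj, hk1, hk⟩
      exact ⟨⟨hj, hk⟩, hk1,
        hk.trans_le (Nat.mul_le_mul_left m (Nat.pow_le_pow_right two_pos hj.le))⟩
    · rintro ⟨⟨hj, hk⟩, hk1, -⟩
      exact ⟨hj, hk1, hk⟩
  calc ∑ j ∈ range J, V (m * 2 ^ j) / 2 ^ ((j : ℝ) / 2)
      ≤ ∑ j ∈ range J, 4 * √m *
          ∑ k ∈ Ico 1 (m * 2 ^ j), V k / ((m : ℝ) * 2 ^ j) ^ ((3 : ℝ) / 2) :=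
        sum_le_sum fun j _ => div_two_rpow_half_le_of_subadditive hnonneg hsub hm j
    _ = 4 * √m * ∑ k ∈ Ico 1 (m * 2 ^ J), V k *
          ∑ j ∈ (range J).filter (fun j => k < m * 2 ^ j),
            1 / ((m : ℝ) * 2 ^ j) ^ ((3 : ℝ) / 2) := by
        simp_rw [← mul_sum, sum_comm' hswap, mul_sum, mul_one_div]
    _ ≤ 4 * √m * ∑ k ∈ Ico 1 (m * 2 ^ J), V k * (2 / max (k : ℝ) m ^ ((3 : ℝ) / 2)) := by
        gcongr with k hk
        · exact hnonneg k (mem_Ico.mp hk).1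
        refine sum_one_div_rpow_mul_two_pow_le (by norm_num) (by positivity) _ fun j hj => ?_
        have hk : k < m * 2 ^ j := (mem_filter.mp hj).2
        exact max_le (by exact_mod_cast hk.le)
          (le_mul_of_one_le_right hm0.le (one_le_pow₀ one_le_two))
    _ = 8 * √m * ∑ n ∈ range (m * 2 ^ J - 1),
          V (n + 1) / max ((n : ℝ) + 1) m ^ ((3 : ℝ) / 2) := by
        rw [sum_Ico_eq_sum_range, mul_sum, mul_sum]
        refine sum_congr rfl fun n _ => ?_
        rw [add_comm 1 n]; push_cast; ring
    _ ≤ _ := by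
        gcongr
        exact Summable.sum_le_tsum _
          (fun n _ => div_nonneg (hnonneg _ n.succ_pos) (by positivity))
          (summable_div_max_rpow (by norm_num) (fun n => hnonneg _ n.succ_pos) hsum _)

/-- Lemma 2.8 of Peligrad–Utev: if `(V n)` is a subadditive sequence of nonnegative
reals with `∑ n^{-3/2} V n < ∞`, then each series `∑_j V (m·2^j)/2^{j/2}` converges and
`(1/√m) ∑_j V (m·2^j)/2^{j/2} → 0` as `m → ∞`. -/
theorem subadditive_weighted_series_tendsto_zero
    (V : ℕ → ℝ)
    (hnonneg : ∀ n, 1 ≤ n → 0 ≤ V n)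
    (hsub : ∀ m n, 1 ≤ m → 1 ≤ n → V (m + n) ≤ V m + V n)
    (hsum : Summable (fun n : ℕ => V (n + 1) / ((n + 1 : ℝ) ^ ((3 : ℝ) / 2)))) :
    (∀ m : ℕ, 1 ≤ m → Summable (fun j : ℕ => V (m * 2 ^ j) / ((2 : ℝ) ^ ((j : ℝ) / 2)))) ∧
    Tendsto (fun m : ℕ =>
        (1 / Real.sqrt m) * ∑' j : ℕ, V (m * 2 ^ j) / ((2 : ℝ) ^ ((j : ℝ) / 2)))
      atTop (nhds 0) := by
  set W : ℕ → ℝ := fun m => ∑' n : ℕ, V (n + 1) / max ((n : ℝ) + 1) m ^ ((3 : ℝ) / 2)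
  have hterm_nonneg : ∀ m, 1 ≤ m → ∀ j : ℕ, 0 ≤ V (m * 2 ^ j) / (2 : ℝ) ^ ((j : ℝ) / 2) :=
    fun m hm j =>
      div_nonneg (hnonneg _ (Nat.one_le_iff_ne_zero.mpr (by positivity))) (by positivity)
  have hpartial : ∀ m, 2 ≤ m → ∀ J,
      ∑ j ∈ range J, V (m * 2 ^ j) / 2 ^ ((j : ℝ) / 2) ≤ 8 * √m * W m :=
    fun m hm => sum_range_div_two_rpow_half_le_of_subadditive hnonneg hsub hsum hm
  have hsummable : ∀ m, 2 ≤ m → Summable fun j : ℕ => V (m * 2 ^ j) / (2 : ℝ) ^ ((j : ℝ) / 2) :=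
    fun m hm => summable_of_sum_range_le (hterm_nonneg m (by omega)) (hpartial m hm)
  refine ⟨fun m hm => ?_, ?_⟩
  · -- the series for `m` is, up to its first term, `2 ^ (-1/2)` times the series for `2 * m`
    rw [← summable_nat_add_iff 1]
    refine ((hsummable (2 * m) (by omega)).div_const (√2)).congr fun j => ?_
    rw [pow_succ, mul_comm m, mul_assoc, Nat.cast_succ, add_div,
      Real.rpow_add two_pos, ← Real.sqrt_eq_rpow, div_div]
    ring_nf
  · have hW : Tendsto (fun m : ℕ => 8 * W m) atTop (𝓝 0) := by
      simpa using (tendsto_tsum_div_max_rpow_zero (by norm_num)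
        (fun n => hnonneg _ n.succ_pos) hsum).const_mul 8
    refine squeeze_zero' ?_ ?_ hW
    · filter_upwards [eventually_ge_atTop 1] with m hm
      exact mul_nonneg (by positivity) (tsum_nonneg (hterm_nonneg m hm))
    · filter_upwards [eventually_ge_atTop 2] with m hm
      have hsm : 0 < √(m : ℝ) := Real.sqrt_pos.mpr (by positivity)
      calc 1 / √(m : ℝ) * ∑' j : ℕ, V (m * 2 ^ j) / 2 ^ ((j : ℝ) / 2)
          ≤ 1 / √(m : ℝ) * (8 * √m * W m) := by
            gcongr
            exact Real.tsum_le_of_sum_range_le (hterm_nonneg m (by omega)) (hpartial m hm)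
        _ = 8 * W m := by field_simp
end

section
/- Conjugacy of tent maps: let 1 < a ≤ √2, x* = (a−1)/(a+1), I₁ = [−x*, x*], and φ_{1a}(x) = −x/x*. Then φ_{1a} maps I₁ bijectively onto [−1,1] and T_{a²} ∘ φ_{1a} = φ_{1a} ∘ T_a² on I₁, where T_b(x) = b − 1 − b|x|. In particular T_a² restricted to I₁ is topologically conjugate to T_{a²} on [−1,1]. -/
/-- The tent map on `[-1,1]` with parameter `b ∈ (1,2]`. -/
def tentMap (b : ℝ) (x : ℝ) : ℝ := b - 1 - b * |x|

/-!
Write `s = (a-1)/(a+1)`; it is the positive fixed point of `T_a`, i.e. `a * s = a - 1 - s`. For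
`|x| ≤ s` the point `T_a x` lies in `[s, a-1]`, on the decreasing branch, so
`T_a² x = a²|x| - (a-1)²` is affine in `|x|`, and `-T_a²(x)/s` is then an affine function of
`|x/s|` which, since `(a²-1) s = (a-1)²`, is exactly `T_{a²}(-x/s)`. That `T_a²` maps `I₁` into
itself reduces to `(a-1)² ≤ s`, i.e. `a² ≤ 2`.
-/

open Set

lemma bijOn_neg_div_Icc {s : ℝ} (hs : 0 < s) :
    BijOn (fun x => -x / s) (Icc (-s) s) (Icc (-1) 1) := by
  refine ⟨fun x hx => ?_, fun x _ y _ hxy => ?_, fun y hy => ⟨-y * s, ?_, ?_⟩⟩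
  · rw [mem_Icc, le_div_iff₀ hs, div_le_iff₀ hs]
    constructor <;> linarith [hx.1, hx.2]
  · simpa [div_left_inj' hs.ne'] using hxy
  · constructor <;> nlinarith [hy.1, hy.2]
  · field_simp

lemma tentMap_tentMap_of_mul_abs_le {a x : ℝ} (h : a * |x| ≤ a - 1) :
    tentMap a (tentMap a x) = a ^ 2 * |x| - (a - 1) ^ 2 := by
  rw [tentMap, tentMap, abs_of_nonneg (by linarith)]
  ring

lemma tentMap_sq_neg_div {a : ℝ} (ha : 1 < a) (y : ℝ) :
    tentMap (a ^ 2) (-y / ((a - 1) / (a + 1)))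
      = -(a ^ 2 * |y| - (a - 1) ^ 2) / ((a - 1) / (a + 1)) := by
  have hm : 0 < a - 1 := by linarith
  have hp : 0 < a + 1 := by linarith
  rw [tentMap, abs_div, abs_neg, abs_of_pos (div_pos hm hp)]
  field_simp
  ring

lemma mul_abs_le_sub_one_of_mem_Icc {a x : ℝ} (ha : 1 < a)
    (hx : x ∈ Icc (-((a - 1) / (a + 1))) ((a - 1) / (a + 1))) :
    a * |x| ≤ a - 1 := by
  have hxs : |x| ≤ (a - 1) / (a + 1) := abs_le.mpr hx
  rw [le_div_iff₀ (by linarith)] at hxs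
  nlinarith [abs_nonneg x]

lemma sq_mul_abs_sub_mem_Icc {a x : ℝ} (ha : 1 < a) (ha2 : a ^ 2 ≤ 2)
    (hx : x ∈ Icc (-((a - 1) / (a + 1))) ((a - 1) / (a + 1))) :
    a ^ 2 * |x| - (a - 1) ^ 2 ∈ Icc (-((a - 1) / (a + 1))) ((a - 1) / (a + 1)) := by
  have hxs : |x| ≤ (a - 1) / (a + 1) := abs_le.mpr hx
  have hpos : (0 : ℝ) < a + 1 := by linarith
  rw [le_div_iff₀ hpos] at hxs
  rw [mem_Icc, neg_le, le_div_iff₀ hpos, le_div_iff₀ hpos]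
  constructor <;> nlinarith [abs_nonneg x]

/-- Conjugacy of tent maps (first branch): for `1 < a ≤ √2`, with `x* = (a-1)/(a+1)`,
`I₁ = [-x*, x*]` and `φ(x) = -x/x*`, the map `φ` is a bijection of `I₁` onto `[-1,1]`,
`T_a²` maps `I₁` into itself, and `T_{a²} ∘ φ = φ ∘ T_a²` on `I₁`. -/
theorem tentMap_conjugacy_first_branch (a : ℝ) (ha1 : 1 < a) (ha2 : a ≤ Real.sqrt 2) :
    Set.BijOn (fun x => -x / ((a - 1) / (a + 1)))
        (Set.Icc (-((a - 1) / (a + 1))) ((a - 1) / (a + 1))) (Set.Icc (-1 : ℝ) 1) ∧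
    Set.MapsTo (fun x => tentMap a (tentMap a x))
        (Set.Icc (-((a - 1) / (a + 1))) ((a - 1) / (a + 1)))
        (Set.Icc (-((a - 1) / (a + 1))) ((a - 1) / (a + 1))) ∧
    ∀ x ∈ Set.Icc (-((a - 1) / (a + 1))) ((a - 1) / (a + 1)),
      tentMap (a ^ 2) (-x / ((a - 1) / (a + 1)))
        = -(tentMap a (tentMap a x)) / ((a - 1) / (a + 1)) := by
  have hs : 0 < (a - 1) / (a + 1) := div_pos (by linarith) (by linarith)
  have ha_sq : a ^ 2 ≤ 2 := (Real.le_sqrt (by linarith) zero_le_two).mp ha2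
  have hT2 : ∀ x ∈ Icc (-((a - 1) / (a + 1))) ((a - 1) / (a + 1)),
      tentMap a (tentMap a x) = a ^ 2 * |x| - (a - 1) ^ 2 := fun x hx =>
    tentMap_tentMap_of_mul_abs_le (mul_abs_le_sub_one_of_mem_Icc ha1 hx)
  refine ⟨bijOn_neg_div_Icc hs, fun x hx => ?_, fun x hx => ?_⟩
  · simpa only [hT2 x hx] using sq_mul_abs_sub_mem_Icc ha1 ha_sq hx
  · rw [hT2 x hx, tentMap_sq_neg_div ha1 x]
end

section
/- Conjugacy of tent maps (second branch): let 1 < a ≤ √2, x* = (a−1)/(a+1), I₀ = [x*, x*(1 + 2/a)], and φ_{0a}(x) = (a/x*)x − a − 1. Then φ_{0a} maps I₀ bijectively onto [−1,1] with inverse φ_{0a}⁻¹(x) = (x*/a)(x + a + 1), and T_{a²} ∘ φ_{0a} = φ_{0a} ∘ T_a² on I₀. -/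
open Set

lemma tentMap_of_nonneg {b x : ℝ} (hx : 0 ≤ x) : tentMap b x = b - 1 - b * x := by
  rw [tentMap, abs_of_nonneg hx]

lemma tentMap_mem_Icc_of_abs_le {b x r : ℝ} (hb : 0 ≤ b) (hx : |x| ≤ r) :
    tentMap b x ∈ Icc (b - 1 - b * r) (b - 1) := by
  have := mul_le_mul_of_nonneg_left hx hb
  constructor <;> simp only [tentMap] <;> nlinarith [abs_nonneg x]

section SecondBranch

variable {a s : ℝ}

/-- The paper's `φ_{0a}` is `tentRescale a x*`. -/
noncomputable def tentRescale (a s x : ℝ) : ℝ := a / s * x - a - 1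

noncomputable def tentRescaleInv (a s y : ℝ) : ℝ := s / a * (y + a + 1)

lemma tentRescale_tentRescaleInv (ha : a ≠ 0) (hs : s ≠ 0) (x : ℝ) :
    tentRescale a s (tentRescaleInv a s x) = x := by
  unfold tentRescale tentRescaleInv
  field_simp; ring

lemma tentRescaleInv_tentRescale (ha : a ≠ 0) (hs : s ≠ 0) (y : ℝ) :
    tentRescaleInv a s (tentRescale a s y) = y := by
  unfold tentRescale tentRescaleInv
  field_simp; ring

lemma mapsTo_tentRescale (ha : 0 < a) (hs : 0 < s) :
    MapsTo (tentRescale a s) (Icc s (s * (1 + 2 / a))) (Icc (-1) 1) := by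
  have hmono : Monotone (tentRescale a s) := fun x y hxy => by
    have := div_pos ha hs
    unfold tentRescale; gcongr
  convert hmono.mapsTo_Icc using 2 <;> unfold tentRescale <;> field_simp <;> ring

lemma mapsTo_tentRescaleInv (ha : 0 < a) (hs : 0 < s) :
    MapsTo (tentRescaleInv a s) (Icc (-1) 1) (Icc s (s * (1 + 2 / a))) := by
  have hmono : Monotone (tentRescaleInv a s) := fun x y hxy => by
    have := div_pos hs ha
    unfold tentRescaleInv; gcongr
  convert hmono.mapsTo_Icc using 2 <;> unfold tentRescaleInv <;> field_simp <;> ring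

lemma bijOn_tentRescale (ha : 0 < a) (hs : 0 < s) :
    BijOn (tentRescale a s) (Icc s (s * (1 + 2 / a))) (Icc (-1) 1) :=
  InvOn.bijOn
    ⟨fun y _ => tentRescaleInv_tentRescale ha.ne' hs.ne' y,
      fun x _ => tentRescale_tentRescaleInv ha.ne' hs.ne' x⟩
    (mapsTo_tentRescale ha hs) (mapsTo_tentRescaleInv ha hs)

variable (hfix : s * (a + 1) = a - 1)
include hfix

lemma abs_tentMap_le_of_mem (ha : 0 < a) (hs : 0 ≤ s) {x : ℝ}
    (hx : x ∈ Icc s (s * (1 + 2 / a))) : |tentMap a x| ≤ s := by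
  have hx₂ : a * x ≤ a * s + 2 * s := by
    calc a * x ≤ a * (s * (1 + 2 / a)) := mul_le_mul_of_nonneg_left hx.2 ha.le
      _ = a * s + 2 * s := by field_simp
  rw [tentMap_of_nonneg (hs.trans hx.1), abs_le]
  constructor <;> nlinarith [hx.1]

lemma mapsTo_tentMap_sq (ha : 0 < a) (hs : 0 ≤ s) (ha2 : a ^ 2 ≤ 2) :
    MapsTo (fun x => tentMap a (tentMap a x)) (Icc s (s * (1 + 2 / a)))
      (Icc s (s * (1 + 2 / a))) := by
  intro x hx
  obtain ⟨hlo, hhi⟩ := tentMap_mem_Icc_of_abs_le ha.le (abs_tentMap_le_of_mem hfix ha hs hx)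
  have hend : a - 1 ≤ s * (1 + 2 / a) := by
    have : a + 1 ≤ 1 + 2 / a := by
      rw [add_comm, add_le_add_iff_left, le_div_iff₀ ha]
      nlinarith
    rw [← hfix]
    exact mul_le_mul_of_nonneg_left this hs
  exact ⟨by linarith, hhi.trans hend⟩

lemma tentMap_sq_tentRescale (ha : 0 < a) (hs : 0 < s) {x : ℝ} (hx : 0 ≤ x) :
    tentMap (a ^ 2) (tentRescale a s x) = tentRescale a s (tentMap a (tentMap a x)) := by
  have hflip : a / s * (a - 1 - a * x) = -a * (a / s * x - a - 1) := by
    rw [← hfix]; field_simp; ring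
  have habs : a / s * |a - 1 - a * x| = a * |a / s * x - a - 1| := by
    calc a / s * |a - 1 - a * x| = |a / s * (a - 1 - a * x)| := by
          rw [abs_mul, abs_of_pos (div_pos ha hs)]
      _ = a * |a / s * x - a - 1| := by rw [hflip, abs_mul, abs_neg, abs_of_pos ha]
  have hconst : a / s * (a - 1) = a ^ 2 + a := by
    rw [← hfix]; field_simp
  rw [tentMap_of_nonneg hx, tentRescale, tentRescale, tentMap, tentMap]
  linear_combination a * habs - hconst

end SecondBranch

/-- Conjugacy of tent maps (second branch): for `1 < a ≤ √2`, with `x* = (a-1)/(a+1)`,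
`I₀ = [x*, x*(1+2/a)]` and `φ₀(x) = (a/x*)x - a - 1`, the map `φ₀` is a bijection of
`I₀` onto `[-1,1]` with inverse `x ↦ (x*/a)(x + a + 1)`, `T_a²` maps `I₀` into itself,
and `T_{a²} ∘ φ₀ = φ₀ ∘ T_a²` on `I₀`. -/
theorem tentMap_conjugacy_second_branch (a : ℝ) (ha1 : 1 < a) (ha2 : a ≤ Real.sqrt 2) :
    Set.BijOn (fun x => (a / ((a - 1) / (a + 1))) * x - a - 1)
        (Set.Icc ((a - 1) / (a + 1)) (((a - 1) / (a + 1)) * (1 + 2 / a)))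
        (Set.Icc (-1 : ℝ) 1) ∧
    (∀ x ∈ Set.Icc (-1 : ℝ) 1,
      (a / ((a - 1) / (a + 1))) * ((((a - 1) / (a + 1)) / a) * (x + a + 1)) - a - 1 = x) ∧
    (∀ y ∈ Set.Icc ((a - 1) / (a + 1)) (((a - 1) / (a + 1)) * (1 + 2 / a)),
      (((a - 1) / (a + 1)) / a) * (((a / ((a - 1) / (a + 1))) * y - a - 1) + a + 1) = y) ∧
    Set.MapsTo (fun x => tentMap a (tentMap a x))
        (Set.Icc ((a - 1) / (a + 1)) (((a - 1) / (a + 1)) * (1 + 2 / a)))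
        (Set.Icc ((a - 1) / (a + 1)) (((a - 1) / (a + 1)) * (1 + 2 / a))) ∧
    ∀ x ∈ Set.Icc ((a - 1) / (a + 1)) (((a - 1) / (a + 1)) * (1 + 2 / a)),
      tentMap (a ^ 2) ((a / ((a - 1) / (a + 1))) * x - a - 1)
        = (a / ((a - 1) / (a + 1))) * tentMap a (tentMap a x) - a - 1 := by
  have ha : 0 < a := by linarith
  have hs : 0 < (a - 1) / (a + 1) := div_pos (by linarith) (by linarith)
  have hfix : (a - 1) / (a + 1) * (a + 1) = a - 1 := div_mul_cancel₀ _ (by linarith)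
  have ha_sq : a ^ 2 ≤ 2 := by
    simpa using pow_le_pow_left₀ ha.le ha2 2
  exact ⟨bijOn_tentRescale ha hs, fun x _ => tentRescale_tentRescaleInv ha.ne' hs.ne' x,
    fun y _ => tentRescaleInv_tentRescale ha.ne' hs.ne' y, mapsTo_tentMap_sq hfix ha hs.le ha_sq,
    fun x hx => tentMap_sq_tentRescale hfix ha hs (hs.le.trans hx.1)⟩
end

section
/- Let T be measure preserving on a probability space (Y, ℬ, ν), ℐ the σ-algebra of T-invariant sets, h ∈ L²(ν), and S_n = ∑_{j=0}^{n−1} h∘T^j. Then for every j ≥ 0, E_ν(S_{2^j} · (S_{2^j}∘T^{2^j}) | ℐ) = E_ν( S_{2^j} · ∑_{k=1}^{2^j} P_T^k h | ℐ ), and ‖E_ν(S_{2^j}·(S_{2^j}∘T^{2^j}) | ℐ)‖₁ ≤ ‖S_{2^j}‖₂ · ‖∑_{k=1}^{2^j} P_T^k h‖₂. -/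
/-!
Fix an invariant set `s`. Since `T` preserves `ν` and `T⁻¹ s = s`, the shift on `h ∘ Tⁱ` can be
moved to the second factor, `∫_s (h ∘ Tⁱ)(S_n ∘ Tⁿ) = ∫_s h (S_n ∘ Tⁿ⁻ⁱ)`, so
`∫_s S_n (S_n ∘ Tⁿ) = ∑_{k=1}^n ∫_s h (S_n ∘ Tᵏ)`. Duality between `Pᵏ` and composition with `Tᵏ`,
applied to the test function `1_s S_n` (again using `1_s ∘ Tᵏ = 1_s`), turns each term into
`∫_s S_n Pᵏh`. The two products thus have equal integrals over every invariant set, hence equal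
conditional expectations given `ℐ`; the bound follows from the `L¹`-contractivity of conditional
expectation and Cauchy–Schwarz. The duality is only assumed for bounded test functions; it
extends to `L²` ones by truncation and dominated convergence.
-/

open MeasureTheory ENNReal Finset

/-- The σ-algebra of strictly `T`-invariant measurable sets. -/
def invariantSigma {Y : Type*} [MeasurableSpace Y] (T : Y → Y) : MeasurableSpace Y where
  MeasurableSet' s := MeasurableSet s ∧ T ⁻¹' s = s
  measurableSet_empty := ⟨MeasurableSet.empty, by simp⟩
  measurableSet_compl s hs := ⟨hs.1.compl, by rw [Set.preimage_compl, hs.2]⟩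
  measurableSet_iUnion f hf :=
    ⟨MeasurableSet.iUnion fun i => (hf i).1, by
      simp only [Set.preimage_iUnion]
      exact Set.iUnion_congr fun i => (hf i).2⟩

open Filter Function Topology

def IsTransferOperator {Y : Type*} [MeasurableSpace Y] (ν : Measure Y) (T : Y → Y)
    (P : (Y → ℝ) → (Y → ℝ)) : Prop :=
  ∀ f : Y → ℝ, Integrable f ν → ∀ g : Y → ℝ, Measurable g → (∃ C : ℝ, ∀ y, |g y| ≤ C) →
    ∫ y, P f y * g y ∂ν = ∫ y, f y * g (T y) ∂ν

def truncation (M : ℕ) (x : ℝ) : ℝ := max (-(M : ℝ)) (min (M : ℝ) x)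

lemma continuous_truncation (M : ℕ) : Continuous (truncation M) := by
  unfold truncation; fun_prop

lemma abs_truncation_le_natCast (M : ℕ) (x : ℝ) : |truncation M x| ≤ M := by
  have := M.cast_nonneg (α := ℝ)
  unfold truncation; grind [abs_le]

lemma abs_truncation_le_abs (M : ℕ) (x : ℝ) : |truncation M x| ≤ |x| := by
  have := M.cast_nonneg (α := ℝ)
  unfold truncation; grind [abs_le]

lemma tendsto_truncation (x : ℝ) : Tendsto (truncation · x) atTop (𝓝 x) := by
  refine tendsto_atTop_of_eventually_const (i₀ := ⌈|x|⌉₊) fun M hM => ?_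
  have := Nat.ceil_le.mp hM
  unfold truncation; grind [abs_le]

lemma sum_range_sub_eq_sum_Icc {M : Type*} [AddCommMonoid M] (f : ℕ → M) (n : ℕ) :
    ∑ i ∈ range n, f (n - i) = ∑ k ∈ Icc 1 n, f k :=
  sum_nbij' (n - ·) (n - ·) (by simp only [mem_range, mem_Icc]; omega)
    (by simp only [mem_range, mem_Icc]; omega) (by simp only [mem_range]; omega)
    (by simp only [mem_Icc]; omega) fun _ _ => rfl

section

variable {Y : Type*} [MeasurableSpace Y] {ν : Measure Y} {T : Y → Y}

lemma invariantSigma_le (T : Y → Y) : invariantSigma T ≤ ‹MeasurableSpace Y› :=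
  fun _ hs => hs.1

lemma MeasureTheory.MemLp.birkhoffSum {p : ℝ≥0∞} {h : Y → ℝ} (hT : MeasurePreserving T ν ν)
    (hh : MemLp h p ν) (n : ℕ) : MemLp (birkhoffSum T h n) p ν :=
  memLp_finsetSum (f := fun i y => h (T^[i] y)) _
    fun i _ => hh.comp_measurePreserving (hT.iterate i)

lemma eLpNorm_mul_le_eLpNorm_two_mul {f g : Y → ℝ} (hf : AEStronglyMeasurable f ν)
    (hg : AEStronglyMeasurable g ν) :
    eLpNorm (fun y => f y * g y) 1 ν ≤ eLpNorm f 2 ν * eLpNorm g 2 ν :=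
  (eLpNorm_smul_le_mul_eLpNorm (p := 2) (q := 2) (r := 1) hg hf :)

lemma tendsto_integral_mul_truncation {f g : Y → ℝ} (hf : MemLp f 2 ν) (hg : MemLp g 2 ν) :
    Tendsto (fun M => ∫ y, f y * truncation M (g y) ∂ν) atTop (𝓝 (∫ y, f y * g y ∂ν)) := by
  refine tendsto_integral_of_dominated_convergence (fun y => ‖f y‖ * ‖g y‖)
    (fun M => hf.1.mul ((continuous_truncation M).comp_aestronglyMeasurable hg.1))
    (hf.norm.integrable_mul hg.norm) (fun M => .of_forall fun y => ?_)
    (.of_forall fun y => (tendsto_truncation (g y)).const_mul (f y))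
  simpa only [norm_mul, Real.norm_eq_abs]
    using mul_le_mul_of_nonneg_left (abs_truncation_le_abs M (g y)) (abs_nonneg (f y))

lemma setIntegral_comp_iterate_of_preimage_eq (hT : MeasurePreserving T ν ν) {s : Set Y}
    (hs : MeasurableSet s) (hsT : T ⁻¹' s = s) (k : ℕ) {F : Y → ℝ}
    (hF : AEStronglyMeasurable F ν) :
    ∫ y in s, F (T^[k] y) ∂ν = ∫ y in s, F y ∂ν := by
  have hTk := (hT.iterate k).restrict_preimage hs
  rw [IsFixedPt.preimage_iterate hsT k] at hTk
  rw [← integral_map hTk.measurable.aemeasurable (by rw [hTk.map_eq]; exact hF.restrict),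
    hTk.map_eq]

lemma condExp_ae_eq_of_forall_setIntegral_eq {α E : Type*} {m m₀ : MeasurableSpace α}
    {μ : Measure α} [NormedAddCommGroup E] [NormedSpace ℝ E] [CompleteSpace E] (hm : m ≤ m₀)
    [SigmaFinite (μ.trim hm)] {f g : α → E} (hf : Integrable f μ) (hg : Integrable g μ)
    (hfg : ∀ s, MeasurableSet[m] s → ∫ x in s, f x ∂μ = ∫ x in s, g x ∂μ) :
    μ[f | m] =ᵐ[μ] μ[g | m] :=
  (ae_eq_condExp_of_forall_setIntegral_eq hm hf (fun _ _ _ => integrable_condExp.integrableOn)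
    (fun s hs _ => by rw [setIntegral_condExp hm hg hs, hfg s hs])
    stronglyMeasurable_condExp.aestronglyMeasurable).symm

lemma setIntegral_birkhoffSum_mul_comp_iterate (hT : MeasurePreserving T ν ν) {s : Set Y}
    (hs : MeasurableSet s) (hsT : T ⁻¹' s = s) {h F : Y → ℝ} (hh : MemLp h 2 ν)
    (hF : MemLp F 2 ν) (n : ℕ) :
    ∫ y in s, birkhoffSum T h n y * F (T^[n] y) ∂ν
      = ∑ k ∈ Icc 1 n, ∫ y in s, h y * F (T^[k] y) ∂ν := by
  have hshift : ∀ i < n, ∫ y in s, h (T^[i] y) * F (T^[n] y) ∂ν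
      = ∫ y in s, h y * F (T^[n - i] y) ∂ν := fun i hi => by
    have := setIntegral_comp_iterate_of_preimage_eq hT hs hsT i
      (F := fun y => h y * F (T^[n - i] y))
      (hh.1.mul (hF.comp_measurePreserving (hT.iterate (n - i))).1)
    simpa only [← iterate_add_apply, Nat.sub_add_cancel hi.le] using this
  calc ∫ y in s, birkhoffSum T h n y * F (T^[n] y) ∂ν
      = ∑ i ∈ range n, ∫ y in s, h (T^[i] y) * F (T^[n] y) ∂ν := by
        simp only [birkhoffSum, sum_mul]
        exact integral_finsetSum _ fun i _ =>
          ((hh.comp_measurePreserving (hT.iterate i)).integrable_mul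
            (hF.comp_measurePreserving (hT.iterate n))).integrableOn
    _ = ∑ i ∈ range n, ∫ y in s, h y * F (T^[n - i] y) ∂ν :=
        sum_congr rfl fun i hi => hshift i (mem_range.mp hi)
    _ = ∑ k ∈ Icc 1 n, ∫ y in s, h y * F (T^[k] y) ∂ν :=
        sum_range_sub_eq_sum_Icc (fun k => ∫ y in s, h y * F (T^[k] y) ∂ν) n

namespace IsTransferOperator

variable {P : (Y → ℝ) → (Y → ℝ)}

lemma integral_iterate_mul (hP : IsTransferOperator ν T P) (hT : Measurable T) {f : Y → ℝ}
    (hPf : ∀ k, Integrable (P^[k] f) ν) (k : ℕ) {g : Y → ℝ} (hg : Measurable g)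
    (hgb : ∃ C, ∀ y, |g y| ≤ C) :
    ∫ y, P^[k] f y * g y ∂ν = ∫ y, f y * g (T^[k] y) ∂ν := by
  induction k generalizing g with
  | zero => rfl
  | succ k ih =>
    rw [iterate_succ_apply', hP _ (hPf k) g hg hgb]
    simpa only [iterate_succ_apply']
      using ih (g := fun y => g (T y)) (hg.comp hT) (hgb.imp fun C hC y => hC (T y))

lemma integral_iterate_mul_of_memLp [IsFiniteMeasure ν] (hP : IsTransferOperator ν T P)
    (hT : MeasurePreserving T ν ν) {f : Y → ℝ} (hf : MemLp f 2 ν)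
    (hPf : ∀ k, MemLp (P^[k] f) 2 ν) (k : ℕ) {g : Y → ℝ} (hg : MemLp g 2 ν) :
    ∫ y, P^[k] f y * g y ∂ν = ∫ y, f y * g (T^[k] y) ∂ν := by
  -- replace `g` by a measurable representative, which `hP` can be tested against
  set g' := hg.1.mk g
  have hgg' : g =ᵐ[ν] g' := hg.1.ae_eq_mk
  have hg' : MemLp g' 2 ν := hg.ae_eq hgg'
  have hg'T : MemLp (g' ∘ T^[k]) 2 ν := hg'.comp_measurePreserving (hT.iterate k)
  have hg'm : Measurable g' := hg.1.stronglyMeasurable_mk.measurable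
  have htrunc : ∀ M, ∫ y, P^[k] f y * truncation M (g' y) ∂ν
      = ∫ y, f y * truncation M (g' (T^[k] y)) ∂ν := fun M =>
    hP.integral_iterate_mul hT.measurable (fun k => (hPf k).integrable one_le_two) k
      ((continuous_truncation M).measurable.comp hg'm)
      ⟨M, fun y => abs_truncation_le_natCast M (g' y)⟩
  calc ∫ y, P^[k] f y * g y ∂ν = ∫ y, P^[k] f y * g' y ∂ν :=
        integral_congr_ae (hgg'.mono fun y hy => congrArg (P^[k] f y * ·) hy)
    _ = ∫ y, f y * g' (T^[k] y) ∂ν :=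
        tendsto_nhds_unique (tendsto_integral_mul_truncation (hPf k) hg')
          ((funext htrunc).symm ▸ tendsto_integral_mul_truncation hf hg'T)
    _ = ∫ y, f y * g (T^[k] y) ∂ν :=
        integral_congr_ae (((hT.iterate k).quasiMeasurePreserving.ae_eq_comp hgg').mono
          fun y hy => congrArg (f y * ·) hy.symm)

lemma setIntegral_mul_iterate_of_memLp [IsFiniteMeasure ν] (hP : IsTransferOperator ν T P)
    (hT : MeasurePreserving T ν ν) {f : Y → ℝ} (hf : MemLp f 2 ν)
    (hPf : ∀ k, MemLp (P^[k] f) 2 ν) {s : Set Y} (hs : MeasurableSet s) (hsT : T ⁻¹' s = s)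
    (k : ℕ) {F : Y → ℝ} (hF : MemLp F 2 ν) :
    ∫ y in s, F y * P^[k] f y ∂ν = ∫ y in s, f y * F (T^[k] y) ∂ν := by
  have hind : ∀ y, s.indicator F (T^[k] y) = s.indicator (F ∘ T^[k]) y := fun y => by
    rw [← Set.indicator_comp_right, IsFixedPt.preimage_iterate hsT k]
  calc ∫ y in s, F y * P^[k] f y ∂ν = ∫ y, P^[k] f y * s.indicator F y ∂ν := by
        simp_rw [← integral_indicator hs, Set.indicator_mul_left, mul_comm]
    _ = ∫ y, f y * s.indicator F (T^[k] y) ∂ν :=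
        hP.integral_iterate_mul_of_memLp hT hf hPf k (hF.indicator hs)
    _ = ∫ y in s, f y * F (T^[k] y) ∂ν := by
        simp_rw [hind, ← Set.indicator_mul_right]
        exact integral_indicator hs

lemma setIntegral_birkhoffSum_mul_comp_iterate_eq [IsFiniteMeasure ν]
    (hP : IsTransferOperator ν T P) (hT : MeasurePreserving T ν ν) {h : Y → ℝ} (hh : MemLp h 2 ν)
    (hPh : ∀ k, MemLp (P^[k] h) 2 ν) {s : Set Y} (hs : MeasurableSet s) (hsT : T ⁻¹' s = s)
    (n : ℕ) {F : Y → ℝ} (hF : MemLp F 2 ν) :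
    ∫ y in s, birkhoffSum T h n y * F (T^[n] y) ∂ν
      = ∫ y in s, F y * ∑ k ∈ Icc 1 n, P^[k] h y ∂ν := by
  simp_rw [setIntegral_birkhoffSum_mul_comp_iterate hT hs hsT hh hF n, mul_sum]
  rw [integral_finsetSum (f := fun k y => F y * P^[k] h y) _
    fun k _ => (hF.integrable_mul (hPh k)).integrableOn]
  exact sum_congr rfl fun k _ => (hP.setIntegral_mul_iterate_of_memLp hT hh hPh hs hsT k hF).symm

end IsTransferOperator

end

/-- With `S_n = ∑_{j<n} h∘T^j`, for every `j ≥ 0` one has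
`E_ν(S_{2^j}·(S_{2^j}∘T^{2^j}) | ℐ) = E_ν(S_{2^j}·∑_{k=1}^{2^j} P_T^k h | ℐ)` and
`‖E_ν(S_{2^j}·(S_{2^j}∘T^{2^j}) | ℐ)‖₁ ≤ ‖S_{2^j}‖₂ ‖∑_{k=1}^{2^j} P_T^k h‖₂`. -/
theorem condexp_crossterm_identity_and_bound
    {Y : Type*} [MeasurableSpace Y] (ν : Measure Y) [IsProbabilityMeasure ν]
    (T : Y → Y) (hT : MeasurePreserving T ν ν)
    (P : (Y → ℝ) → (Y → ℝ))
    (hP : ∀ f : Y → ℝ, Integrable f ν → ∀ g : Y → ℝ, Measurable g → (∃ C : ℝ, ∀ y, |g y| ≤ C) →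
      ∫ y, P f y * g y ∂ν = ∫ y, f y * g (T y) ∂ν)
    (h : Y → ℝ) (hh : MemLp h 2 ν)
    (hPh : ∀ k : ℕ, MemLp (P^[k] h) 2 ν) :
    ∀ j : ℕ,
      (ν[(fun y => (∑ i ∈ range (2 ^ j), h (T^[i] y)) *
            (∑ i ∈ range (2 ^ j), h (T^[i] (T^[2 ^ j] y)))) | invariantSigma T]
        =ᵐ[ν]
       ν[(fun y => (∑ i ∈ range (2 ^ j), h (T^[i] y)) *
            (∑ k ∈ Finset.Icc 1 (2 ^ j), (P^[k] h) y)) | invariantSigma T]) ∧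
      eLpNorm
          (ν[(fun y => (∑ i ∈ range (2 ^ j), h (T^[i] y)) *
              (∑ i ∈ range (2 ^ j), h (T^[i] (T^[2 ^ j] y)))) | invariantSigma T]) 1 ν
        ≤ eLpNorm (fun y => ∑ i ∈ range (2 ^ j), h (T^[i] y)) 2 ν *
            eLpNorm (fun y => ∑ k ∈ Finset.Icc 1 (2 ^ j), (P^[k] h) y) 2 ν := by
  intro j
  set n := 2 ^ j
  have hS : MemLp (birkhoffSum T h n) 2 ν := hh.birkhoffSum hT n
  have hQ : MemLp (fun y => ∑ k ∈ Icc 1 n, P^[k] h y) 2 ν := memLp_finsetSum _ fun k _ => hPh k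
  have hident : ν[fun y => birkhoffSum T h n y * birkhoffSum T h n (T^[n] y) | invariantSigma T]
      =ᵐ[ν] ν[fun y => birkhoffSum T h n y * ∑ k ∈ Icc 1 n, P^[k] h y | invariantSigma T] :=
    condExp_ae_eq_of_forall_setIntegral_eq (invariantSigma_le T)
      (hS.integrable_mul (hS.comp_measurePreserving (hT.iterate n))) (hS.integrable_mul hQ)
      fun s hs => IsTransferOperator.setIntegral_birkhoffSum_mul_comp_iterate_eq hP hT hh hPh
        hs.1 hs.2 n hS
  exact ⟨hident, (eLpNorm_congr_ae hident).trans_le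
    ((eLpNorm_condExp_le_eLpNorm _ le_rfl).trans (eLpNorm_mul_le_eLpNorm_two_mul hS.1 hQ.1))⟩
end
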